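/- arXiv:1702.08168 — 3 statements merged into one kernel-verified Lean document; each statement's English description precedes it below -/
import Mathlib

section
/- For every integer N ≥ 1, the functions rᵢ: Eᵢ → ℂ defined by rᵢ(e) = exp(π𝐢·lᵢ(e)/N)·|Pᵢ(e)|^{1/N} satisfy (i) rᵢ(e)^N = Pᵢ(e) for all e ∈ Eᵢ, i ∈ {1,2}, and (ii) the Mazorchuk–Turowska equation r₁(u+β/2)r₂(u+α/2) = r₁(u−β/2)r₂(u−α/2) for all u ∈ V. -/
open Complex

noncomputable section
open scoped Classical

/-- The face lattice `F = ℤα + ℤβ ⊆ ℝ`. -/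
def latF (α β : ℝ) : Set ℝ := {u | ∃ x y : ℤ, u = x * α + y * β}

/-- The vertex lattice `V = F + (α+β)/2`. -/
def latV (α β : ℝ) : Set ℝ := {u | ∃ x y : ℤ, u = x * α + y * β + (α + β) / 2}

/-- The vertical edge lattice `E₁ = F + α/2`. -/
def latE1 (α β : ℝ) : Set ℝ := {u | ∃ x y : ℤ, u = x * α + y * β + α / 2}

/-- The horizontal edge lattice `E₂ = F + β/2`. -/
def latE2 (α β : ℝ) : Set ℝ := {u | ∃ x y : ℤ, u = x * α + y * β + β / 2}

/-- An `(m,n)`-periodic higher spin vertex configuration: a pair of finitely supported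
multiplicity functions, supported on `E₁` resp. `E₂`, satisfying the current
conservation rule. -/
structure Config (α β : ℝ) (ℒ₁ ℒ₂ : ℝ → ℕ) : Prop where
  supp1 : ∀ u : ℝ, ℒ₁ u ≠ 0 → u ∈ latE1 α β
  supp2 : ∀ u : ℝ, ℒ₂ u ≠ 0 → u ∈ latE2 α β
  fin1 : (Function.support ℒ₁).Finite
  fin2 : (Function.support ℒ₂).Finite
  conserv : ∀ v ∈ latV α β,
    ℒ₁ (v + β / 2) + ℒ₂ (v + α / 2) = ℒ₁ (v - β / 2) + ℒ₂ (v - α / 2)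

/-- `Pᵢ(u) = ∏_{e} (u-e)^{ℒᵢ(e)}` as a function on `ℂ` (a finite product). -/
def PfunC (ℒ : ℝ → ℕ) (u : ℂ) : ℂ := ∏ᶠ e : ℝ, (u - (e : ℂ)) ^ ℒ e

/-- `Pᵢ(u) = ∏_{e} (u-e)^{ℒᵢ(e)}` as a real-valued function on `ℝ`. -/
def PfunR (ℒ : ℝ → ℕ) (u : ℝ) : ℝ := ∏ᶠ e : ℝ, (u - e) ^ ℒ e

/-- `lᵢ(u) = Σ_{e > u} ℒᵢ(e)`. -/
def lfun (ℒ : ℝ → ℕ) (u : ℝ) : ℕ := ∑ᶠ e : ℝ, if u < e then ℒ e else 0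

/-- The `N`-th root `rᵢ(e) = exp(π𝐢·lᵢ(e)/N)·|Pᵢ(e)|^{1/N}`. -/
def rfun (N : ℕ) (ℒ : ℝ → ℕ) (e : ℝ) : ℂ :=
  Complex.exp (Real.pi * Complex.I * (lfun ℒ e : ℂ) / (N : ℂ)) *
    ((|PfunR ℒ e| ^ ((1 : ℝ) / (N : ℝ)) : ℝ) : ℂ)

-- aux lemmas
lemma PfunR_eq_prod (ℒ : ℝ → ℕ) (hfin : (Function.support ℒ).Finite) (u : ℝ) :
    PfunR ℒ u = ∏ e ∈ hfin.toFinset, (u - e) ^ ℒ e := by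
  apply finprod_eq_prod_of_mulSupport_subset
  intro e he
  simp only [Function.mem_mulSupport] at he
  simp only [Finset.coe_sort_coe, Set.Finite.coe_toFinset, Function.mem_support]
  intro h0
  exact he (by rw [h0, pow_zero])

lemma lfun_eq_sum (ℒ : ℝ → ℕ) (hfin : (Function.support ℒ).Finite) (u : ℝ) :
    lfun ℒ u = ∑ e ∈ hfin.toFinset, if u < e then ℒ e else 0 := by
  apply finsum_eq_sum_of_support_subset
  intro e he
  simp only [Function.mem_support] at he
  simp only [Finset.coe_sort_coe, Set.Finite.coe_toFinset, Function.mem_support]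
  intro h0
  apply he
  rw [h0]; simp

lemma sign_key (ℒ : ℝ → ℕ) (hfin : (Function.support ℒ).Finite) (u : ℝ) :
    (-1 : ℝ) ^ (lfun ℒ u) * |PfunR ℒ u| = PfunR ℒ u := by
  rw [PfunR_eq_prod ℒ hfin u, lfun_eq_sum ℒ hfin u, Finset.abs_prod,
    ← Finset.prod_pow_eq_pow_sum, ← Finset.prod_mul_distrib]
  apply Finset.prod_congr rfl
  intro e _
  split_ifs with h
  · have h1 : |((u - e) ^ ℒ e)| = (e - u) ^ ℒ e := by
      rw [_root_.abs_pow, _root_.abs_of_neg (by linarith), neg_sub]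
    rw [h1, ← neg_one_mul, ← mul_pow]
    ring_nf
  · rw [pow_zero, one_mul, _root_.abs_of_nonneg (pow_nonneg (by linarith) _)]

lemma root_key (N : ℕ) (hN : 1 ≤ N) (ℒ : ℝ → ℕ) (hfin : (Function.support ℒ).Finite)
    (e : ℝ) : rfun N ℒ e ^ N = (PfunR ℒ e : ℂ) := by
  have hN0 : (N : ℂ) ≠ 0 := Nat.cast_ne_zero.2 (by omega)
  rw [rfun, mul_pow]
  have h1 : Complex.exp (Real.pi * Complex.I * (lfun ℒ e : ℂ) / (N : ℂ)) ^ N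
      = ((-1 : ℝ) ^ (lfun ℒ e) : ℂ) := by
    rw [← Complex.exp_nat_mul]
    have : (N : ℂ) * (Real.pi * Complex.I * (lfun ℒ e : ℂ) / (N : ℂ))
        = (lfun ℒ e : ℂ) * (Real.pi * Complex.I) := by
      field_simp
    rw [this, Complex.exp_nat_mul]
    push_cast
    congr 1
    simpa using Complex.exp_pi_mul_I
  have h2 : (((|PfunR ℒ e| ^ ((1 : ℝ) / (N : ℝ)) : ℝ)) : ℂ) ^ N
      = ((|PfunR ℒ e| : ℝ) : ℂ) := by
    rw [← Complex.ofReal_pow]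
    congr 1
    rw [← Real.rpow_natCast (|PfunR ℒ e| ^ ((1 : ℝ) / (N : ℝ))) N,
      ← Real.rpow_mul (abs_nonneg _), one_div,
      inv_mul_cancel₀ (Nat.cast_ne_zero.2 (by omega) : (N:ℝ) ≠ 0), Real.rpow_one]
  rw [h1, h2, ← Complex.ofReal_pow, ← Complex.ofReal_mul, sign_key ℒ hfin e]

lemma conserv_all (α β : ℝ) (ℒ₁ ℒ₂ : ℝ → ℕ) (hconf : Config α β ℒ₁ ℒ₂) (v : ℝ) :
    ℒ₁ (v + β / 2) + ℒ₂ (v + α / 2) = ℒ₁ (v - β / 2) + ℒ₂ (v - α / 2) := by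
  by_cases hv : v ∈ latV α β
  · exact hconf.conserv v hv
  · have h1 : ℒ₁ (v + β / 2) = 0 := by
      by_contra hc
      obtain ⟨x, y, hxy⟩ := hconf.supp1 _ hc
      exact hv ⟨x, y - 1, by push_cast; linarith⟩
    have h2 : ℒ₂ (v + α / 2) = 0 := by
      by_contra hc
      obtain ⟨x, y, hxy⟩ := hconf.supp2 _ hc
      exact hv ⟨x - 1, y, by push_cast; linarith⟩
    have h3 : ℒ₁ (v - β / 2) = 0 := by
      by_contra hc
      obtain ⟨x, y, hxy⟩ := hconf.supp1 _ hc
      exact hv ⟨x, y, by push_cast; linarith⟩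
    have h4 : ℒ₂ (v - α / 2) = 0 := by
      by_contra hc
      obtain ⟨x, y, hxy⟩ := hconf.supp2 _ hc
      exact hv ⟨x, y, by push_cast; linarith⟩
    rw [h1, h2, h3, h4]

lemma lfun_shift (ℒ : ℝ → ℕ) (c u : ℝ) (T : Finset ℝ)
    (hT : ∀ v : ℝ, ℒ (v + c) ≠ 0 → v ∈ T) :
    lfun ℒ (u + c) = ∑ v ∈ T, if u < v then ℒ (v + c) else 0 := by
  have h0 : lfun ℒ (u + c) = ∑ e ∈ T.image (· + c), if u + c < e then ℒ e else 0 := by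
    apply finsum_eq_sum_of_support_subset
    intro e he
    simp only [Function.mem_support] at he
    have hL : ℒ e ≠ 0 := by intro h; rw [h] at he; simp at he
    have : e - c ∈ T := hT (e - c) (by rwa [sub_add_cancel])
    simp only [Finset.coe_image, Set.mem_image, Finset.mem_coe]
    exact ⟨e - c, this, by ring⟩
  rw [h0, Finset.sum_image (fun x _ y _ h => by linarith [h] )]
  · apply Finset.sum_congr rfl
    intro v _
    congr 1
    simp [add_lt_add_iff_right]

lemma PfunR_shift (ℒ : ℝ → ℕ) (hfin : (Function.support ℒ).Finite) (c u : ℝ) (T : Finset ℝ)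
    (hT : ∀ v : ℝ, ℒ (v + c) ≠ 0 → v ∈ T) :
    PfunR ℒ (u + c) = ∏ v ∈ T, (u - v) ^ ℒ (v + c) := by
  have h0 : PfunR ℒ (u + c) = ∏ e ∈ T.image (· + c), (u + c - e) ^ ℒ e := by
    apply finprod_eq_prod_of_mulSupport_subset
    intro e he
    simp only [Function.mem_mulSupport] at he
    have hL : ℒ e ≠ 0 := by intro h; rw [h, pow_zero] at he; exact he rfl
    have : e - c ∈ T := hT (e - c) (by rwa [sub_add_cancel])
    simp only [Finset.coe_image, Set.mem_image, Finset.mem_coe]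
    exact ⟨e - c, this, by ring⟩
  rw [h0, Finset.prod_image (fun x _ y _ h => by linarith [h])]
  apply Finset.prod_congr rfl
  intro v _
  have hh : u + c - (v + c) = u - v := by ring
  rw [hh]

lemma rfun_mul (N : ℕ) (ℒ₁ ℒ₂ : ℝ → ℕ) (x y : ℝ) :
    rfun N ℒ₁ x * rfun N ℒ₂ y =
      Complex.exp (Real.pi * Complex.I * ((lfun ℒ₁ x + lfun ℒ₂ y : ℕ) : ℂ) / (N : ℂ)) *
        ((|PfunR ℒ₁ x * PfunR ℒ₂ y| ^ ((1 : ℝ) / (N : ℝ)) : ℝ) : ℂ) := by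
  have h : Real.pi * Complex.I * ((lfun ℒ₁ x + lfun ℒ₂ y : ℕ) : ℂ) / (N : ℂ)
      = Real.pi * Complex.I * (lfun ℒ₁ x : ℂ) / (N : ℂ)
        + Real.pi * Complex.I * (lfun ℒ₂ y : ℂ) / (N : ℂ) := by
    push_cast; ring
  rw [rfun, rfun, h, Complex.exp_add, abs_mul,
    Real.mul_rpow (abs_nonneg _) (abs_nonneg _), Complex.ofReal_mul]
  ring


/-- For every `N ≥ 1`, the functions `rᵢ(e) = exp(π𝐢·lᵢ(e)/N)·|Pᵢ(e)|^{1/N}` satisfy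
(i) `rᵢ(e)^N = Pᵢ(e)` for all `e ∈ Eᵢ`, and (ii) the Mazorchuk–Turowska equation on `V`. -/
theorem stmt7 (m n : ℕ) (hmn : Nat.Coprime m n) (α β : ℝ)
    (hαβ : (α, β) ≠ ((0 : ℝ), (0 : ℝ))) (hlin : (m : ℝ) * α + (n : ℝ) * β = 0)
    (ℒ₁ ℒ₂ : ℝ → ℕ) (hconf : Config α β ℒ₁ ℒ₂) (N : ℕ) (hN : 1 ≤ N) :
    (∀ e ∈ latE1 α β, rfun N ℒ₁ e ^ N = (PfunR ℒ₁ e : ℂ)) ∧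
    (∀ e ∈ latE2 α β, rfun N ℒ₂ e ^ N = (PfunR ℒ₂ e : ℂ)) ∧
    (∀ u ∈ latV α β,
      rfun N ℒ₁ (u + β / 2) * rfun N ℒ₂ (u + α / 2) =
      rfun N ℒ₁ (u - β / 2) * rfun N ℒ₂ (u - α / 2)) := by
  refine ⟨fun e _ => root_key N hN ℒ₁ hconf.fin1 e,
    fun e _ => root_key N hN ℒ₂ hconf.fin2 e, ?_⟩
  intro u _
  set T : Finset ℝ := ((hconf.fin1.toFinset.image (· - β / 2)) ∪
      (hconf.fin1.toFinset.image (· + β / 2))) ∪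
      ((hconf.fin2.toFinset.image (· - α / 2)) ∪
      (hconf.fin2.toFinset.image (· + α / 2))) with hTdef
  have hT1 : ∀ v : ℝ, ℒ₁ (v + β / 2) ≠ 0 → v ∈ T := by
    intro v hv
    simp only [hTdef, Finset.mem_union, Finset.mem_image, Set.Finite.mem_toFinset,
      Function.mem_support]
    exact Or.inl (Or.inl ⟨v + β / 2, hv, by ring⟩)
  have hT1' : ∀ v : ℝ, ℒ₁ (v + -(β / 2)) ≠ 0 → v ∈ T := by
    intro v hv
    simp only [hTdef, Finset.mem_union, Finset.mem_image, Set.Finite.mem_toFinset,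
      Function.mem_support]
    exact Or.inl (Or.inr ⟨v + -(β / 2), hv, by ring⟩)
  have hT2 : ∀ v : ℝ, ℒ₂ (v + α / 2) ≠ 0 → v ∈ T := by
    intro v hv
    simp only [hTdef, Finset.mem_union, Finset.mem_image, Set.Finite.mem_toFinset,
      Function.mem_support]
    exact Or.inr (Or.inl ⟨v + α / 2, hv, by ring⟩)
  have hT2' : ∀ v : ℝ, ℒ₂ (v + -(α / 2)) ≠ 0 → v ∈ T := by
    intro v hv
    simp only [hTdef, Finset.mem_union, Finset.mem_image, Set.Finite.mem_toFinset,
      Function.mem_support]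
    exact Or.inr (Or.inr ⟨v + -(α / 2), hv, by ring⟩)
  have e1 := lfun_shift ℒ₁ (β / 2) u T hT1
  have e2 := lfun_shift ℒ₂ (α / 2) u T hT2
  have e3 := lfun_shift ℒ₁ (-(β / 2)) u T hT1'
  have e4 := lfun_shift ℒ₂ (-(α / 2)) u T hT2'
  have p1 := PfunR_shift ℒ₁ hconf.fin1 (β / 2) u T hT1
  have p2 := PfunR_shift ℒ₂ hconf.fin2 (α / 2) u T hT2
  have p3 := PfunR_shift ℒ₁ hconf.fin1 (-(β / 2)) u T hT1'
  have p4 := PfunR_shift ℒ₂ hconf.fin2 (-(α / 2)) u T hT2'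
  simp only [← sub_eq_add_neg] at e3 e4 p3 p4
  have hl : lfun ℒ₁ (u + β / 2) + lfun ℒ₂ (u + α / 2)
      = lfun ℒ₁ (u - β / 2) + lfun ℒ₂ (u - α / 2) := by
    rw [e1, e2, e3, e4, ← Finset.sum_add_distrib, ← Finset.sum_add_distrib]
    refine Finset.sum_congr rfl fun v _ => ?_
    split_ifs with h
    · exact conserv_all α β ℒ₁ ℒ₂ hconf v
    · rfl
  have hP : PfunR ℒ₁ (u + β / 2) * PfunR ℒ₂ (u + α / 2)
      = PfunR ℒ₁ (u - β / 2) * PfunR ℒ₂ (u - α / 2) := by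
    rw [p1, p2, p3, p4, ← Finset.prod_mul_distrib, ← Finset.prod_mul_distrib]
    refine Finset.prod_congr rfl fun v _ => ?_
    rw [← pow_add, ← pow_add, conserv_all α β ℒ₁ ℒ₂ hconf v]
  rw [rfun_mul, rfun_mul, hl, hP]

end
end

section
/- (Eight-vertex property of the internal sign configuration.) Let v ∈ V be such that the four real numbers P₁(v+β/2), P₁(v−β/2), P₂(v+α/2), P₂(v−α/2) are all nonzero. Then sgn(P₁(v+β/2))·sgn(P₂(v+α/2)) = sgn(P₁(v−β/2))·sgn(P₂(v−α/2)); equivalently, the number of edges among these four at which the corresponding value of Pᵢ is negative is even. -/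
open Complex

noncomputable section
open scoped Classical

/-!
Writing `Nᵢ(u) = massAbove ℒᵢ u` for the number of roots of `Pᵢ` above `u`, counted with
multiplicity, the sign of `Pᵢ(u)` at a non-root is `(-1)^Nᵢ(u)`. Since `ℒ₁` vanishes off
`E₁ = V ± β/2` and `ℒ₂` off `E₂ = V ± α/2`, current conservation holds at every real `w`, not only
on `V`; summing it over all `w > v` gives `N₁(v+β/2) + N₂(v+α/2) = N₁(v-β/2) + N₂(v-α/2)`.
-/

open Set Function

def massAbove (f : ℝ → ℕ) (u : ℝ) : ℕ := ∑ᶠ e ∈ Ioi u, f e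

lemma massAbove_eq_finsum_comp_add (f : ℝ → ℕ) (v c : ℝ) :
    massAbove f (v + c) = ∑ᶠ w ∈ Ioi v, f (w + c) := by
  rw [massAbove, ← image_add_const_Ioi, finsum_mem_image (add_left_injective c).injOn]

lemma Real.sign_neg_one_pow_mul {x : ℝ} (hx : 0 < x) (k : ℕ) :
    Real.sign ((-1) ^ k * x) = (-1) ^ k := by
  rcases neg_one_pow_eq_or ℝ k with h | h <;> rw [h]
  · rw [one_mul, Real.sign_of_pos hx]
  · rw [neg_one_mul, Real.sign_of_neg (neg_neg_of_pos hx)]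

lemma pow_eq_neg_one_pow_ite_mul_abs_pow (u e : ℝ) (n : ℕ) :
    (u - e) ^ n = (-1) ^ (if u < e then n else 0) * |u - e| ^ n := by
  split_ifs with h
  · rw [abs_of_neg (sub_neg.2 h), ← mul_pow, neg_one_mul, neg_neg]
  · rw [pow_zero, one_mul, abs_of_nonneg (sub_nonneg.2 (not_lt.1 h))]

lemma pfunR_eq_neg_one_pow_massAbove_mul {f : ℝ → ℕ} (hf : (support f).Finite) (u : ℝ) :
    PfunR f u = (-1) ^ massAbove f u * ∏ e ∈ hf.toFinset, |u - e| ^ f e := by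
  have hprod : PfunR f u = ∏ e ∈ hf.toFinset, (u - e) ^ f e := by
    refine finprod_eq_prod_of_mulSupport_subset _ fun e he => ?_
    rw [Finite.coe_toFinset, mem_support]
    intro h
    exact he (by simp only [h, pow_zero])
  have hmass : massAbove f u = ∑ e ∈ hf.toFinset, if u < e then f e else 0 :=
    (finsum_mem_eq_sum_filter f (Ioi u) hf).trans (Finset.sum_filter _ _)
  rw [hprod, hmass, ← Finset.prod_pow_eq_pow_sum, ← Finset.prod_mul_distrib]
  exact Finset.prod_congr rfl fun e _ => pow_eq_neg_one_pow_ite_mul_abs_pow u e (f e)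

lemma sign_pfunR {f : ℝ → ℕ} (hf : (support f).Finite) {u : ℝ} (hu : PfunR f u ≠ 0) :
    Real.sign (PfunR f u) = (-1) ^ massAbove f u := by
  have hfactor := pfunR_eq_neg_one_pow_massAbove_mul hf u
  have hpos : 0 < ∏ e ∈ hf.toFinset, |u - e| ^ f e := by
    refine (Finset.prod_nonneg fun e _ => by positivity).lt_of_ne fun h => hu ?_
    rw [hfactor, ← h, mul_zero]
  rw [hfactor, Real.sign_neg_one_pow_mul hpos]

section Lattices

variable {α β u : ℝ}

lemma add_half_mem_latV_of_mem_latE1 (hu : u ∈ latE1 α β) : u + β / 2 ∈ latV α β := by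
  obtain ⟨x, y, rfl⟩ := hu
  exact ⟨x, y, by ring⟩

lemma sub_half_mem_latV_of_mem_latE1 (hu : u ∈ latE1 α β) : u - β / 2 ∈ latV α β := by
  obtain ⟨x, y, rfl⟩ := hu
  exact ⟨x, y - 1, by push_cast; ring⟩

lemma add_half_mem_latV_of_mem_latE2 (hu : u ∈ latE2 α β) : u + α / 2 ∈ latV α β := by
  obtain ⟨x, y, rfl⟩ := hu
  exact ⟨x, y, by ring⟩

lemma sub_half_mem_latV_of_mem_latE2 (hu : u ∈ latE2 α β) : u - α / 2 ∈ latV α β := by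
  obtain ⟨x, y, rfl⟩ := hu
  exact ⟨x - 1, y, by push_cast; ring⟩

end Lattices

namespace Config

variable {α β : ℝ} {ℒ₁ ℒ₂ : ℝ → ℕ}

lemma conserv_everywhere (hconf : Config α β ℒ₁ ℒ₂) (w : ℝ) :
    ℒ₁ (w + β / 2) + ℒ₂ (w + α / 2) = ℒ₁ (w - β / 2) + ℒ₂ (w - α / 2) := by
  by_cases hw : w ∈ latV α β
  · exact hconf.conserv w hw
  have h₁ : ℒ₁ (w + β / 2) = 0 := by
    by_contra h
    exact hw (by simpa using sub_half_mem_latV_of_mem_latE1 (hconf.supp1 _ h))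
  have h₂ : ℒ₂ (w + α / 2) = 0 := by
    by_contra h
    exact hw (by simpa using sub_half_mem_latV_of_mem_latE2 (hconf.supp2 _ h))
  have h₃ : ℒ₁ (w - β / 2) = 0 := by
    by_contra h
    exact hw (by simpa using add_half_mem_latV_of_mem_latE1 (hconf.supp1 _ h))
  have h₄ : ℒ₂ (w - α / 2) = 0 := by
    by_contra h
    exact hw (by simpa using add_half_mem_latV_of_mem_latE2 (hconf.supp2 _ h))
  rw [h₁, h₂, h₃, h₄]

lemma massAbove_conserv (hconf : Config α β ℒ₁ ℒ₂) (v : ℝ) :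
    massAbove ℒ₁ (v + β / 2) + massAbove ℒ₂ (v + α / 2) =
      massAbove ℒ₁ (v - β / 2) + massAbove ℒ₂ (v - α / 2) := by
  have fin₁ (c : ℝ) : (Ioi v ∩ support fun w => ℒ₁ (w + c)).Finite :=
    (hconf.fin1.preimage (add_left_injective c).injOn).inter_of_right _
  have fin₂ (c : ℝ) : (Ioi v ∩ support fun w => ℒ₂ (w + c)).Finite :=
    (hconf.fin2.preimage (add_left_injective c).injOn).inter_of_right _
  simp only [sub_eq_add_neg, massAbove_eq_finsum_comp_add]
  rw [← finsum_mem_add_distrib' (fin₁ _) (fin₂ _), ← finsum_mem_add_distrib' (fin₁ _) (fin₂ _)]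
  refine finsum_mem_congr rfl fun w _ => ?_
  simpa only [sub_eq_add_neg] using hconf.conserv_everywhere w

end Config

theorem stmt8_general (α β : ℝ)
    (ℒ₁ ℒ₂ : ℝ → ℕ) (hconf : Config α β ℒ₁ ℒ₂) :
    ∀ v ∈ latV α β,
      PfunR ℒ₁ (v + β / 2) ≠ 0 → PfunR ℒ₁ (v - β / 2) ≠ 0 →
      PfunR ℒ₂ (v + α / 2) ≠ 0 → PfunR ℒ₂ (v - α / 2) ≠ 0 →
      Real.sign (PfunR ℒ₁ (v + β / 2)) * Real.sign (PfunR ℒ₂ (v + α / 2)) =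
      Real.sign (PfunR ℒ₁ (v - β / 2)) * Real.sign (PfunR ℒ₂ (v - α / 2)) := by
  intro v _ h1p h1m h2p h2m
  rw [sign_pfunR hconf.fin1 h1p, sign_pfunR hconf.fin2 h2p, sign_pfunR hconf.fin1 h1m,
    sign_pfunR hconf.fin2 h2m, ← pow_add, ← pow_add, hconf.massAbove_conserv v]

/-- Eight-vertex property of the internal sign configuration: if the values of
`P₁, P₂` at the four edges around a vertex `v ∈ V` are all nonzero, then
`sgn(P₁(v+β/2))·sgn(P₂(v+α/2)) = sgn(P₁(v−β/2))·sgn(P₂(v−α/2))`. -/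
theorem stmt8 (m n : ℕ) (hmn : Nat.Coprime m n) (α β : ℝ)
    (hαβ : (α, β) ≠ ((0 : ℝ), (0 : ℝ))) (hlin : (m : ℝ) * α + (n : ℝ) * β = 0)
    (ℒ₁ ℒ₂ : ℝ → ℕ) (hconf : Config α β ℒ₁ ℒ₂) :
    ∀ v ∈ latV α β,
      PfunR ℒ₁ (v + β / 2) ≠ 0 → PfunR ℒ₁ (v - β / 2) ≠ 0 →
      PfunR ℒ₂ (v + α / 2) ≠ 0 → PfunR ℒ₂ (v - α / 2) ≠ 0 →
      Real.sign (PfunR ℒ₁ (v + β / 2)) * Real.sign (PfunR ℒ₂ (v + α / 2)) =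
      Real.sign (PfunR ℒ₁ (v - β / 2)) * Real.sign (PfunR ℒ₂ (v - α / 2)) :=
  stmt8_general α β ℒ₁ ℒ₂ hconf

end
end

section
/- For every sequence 𝐢 = ⟨i₁,…,i_ℓ⟩ ∈ Seq₂(m,n) (with ℓ = m+n) and every u ∈ ℂ, one has ∏_{j=1}^{ℓ} P_{i_j}(u+σ_j+α_{i_j}/2) = ∏_{λ∈F} (u−λ)^{2·ord(𝐢,λ)}, where the product on the right has only finitely many factors different from 1 since ord(𝐢,·) is nonzero at only finitely many λ ∈ F. -/
open Complex

noncomputable section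
open scoped Classical

/-- The step `α₁ = α` (for `i = 0`, i.e. a `1`-step) or `α₂ = β` (for `i = 1`). -/
def stepOf (α β : ℝ) (i : Fin 2) : ℝ := if i = 0 then α else β

/-- `σ_j = α_{i₁} + ⋯ + α_{i_{j-1}}`, the partial sum of the first `j` steps. -/
def sigmaL (α β : ℝ) (l : List (Fin 2)) (j : ℕ) : ℝ :=
  ((l.take j).map (stepOf α β)).sum

/-- `ord(𝐢,λ) = Σ_{j : i_j = 1} 𝓛₁(λ + σ_j + α/2)`. -/
def ordL (α β : ℝ) (ℒ₁ : ℝ → ℕ) (l : List (Fin 2)) (lam : ℝ) : ℕ :=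
  ∑ j ∈ Finset.range l.length,
    if l.getD j 0 = 0 then ℒ₁ (lam + sigmaL α β l j + α / 2) else 0


/-!
Write `f x = ℒ₁ (x + α/2)` and `g x = ℒ₂ (x + β/2)`. Substituting `λ ↦ λ + σ_j` in the `j`-th
factor turns the left side into `∏_λ (u - λ) ^ (A λ + B λ)`, where `A λ = ord(𝐢, λ)` sums `f`
over the points `λ + σ_j` at which the path makes a `1`-step and `B λ` sums `g` over those of its
`2`-steps. Current conservation says that the signed weight (`f` on `α`-steps, `-g` on
`β`-steps) is closed, so `A - B` does not change when the steps of the path are permuted. Since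
`mα + nβ = 0` the path is a loop, and moving its first step to the end shows that `A - B` is
periodic with periods `α` and `β`. Being finitely supported, with one of the periods nonzero, it
vanishes, so `A = B` and the exponent is `2 ord(𝐢, λ)`.
-/

open Function

lemma Function.HasFiniteSupport.comp_add_right {G M : Type*} [AddGroup G] [Zero M] {f : G → M}
    (hf : HasFiniteSupport f) (c : G) : HasFiniteSupport fun x => f (x + c) :=
  hf.fun_comp_of_injective (add_left_injective c)

lemma mem_latF_iff {α β x : ℝ} : x ∈ latF α β ↔ x ∈ AddSubgroup.closure {α, β} := by
  simp [latF, AddSubgroup.mem_closure_pair, zsmul_eq_mul, eq_comm]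

lemma sigmaL_mem_latF (α β : ℝ) (l : List (Fin 2)) (j : ℕ) : sigmaL α β l j ∈ latF α β := by
  refine mem_latF_iff.2 (AddSubgroup.list_sum_mem _ fun x hx => ?_)
  obtain ⟨i, -, rfl⟩ := List.mem_map.1 hx
  fin_cases i <;> exact AddSubgroup.subset_closure (by simp [stepOf])

lemma add_mem_latF_iff {α β x c : ℝ} (hc : c ∈ latF α β) : x + c ∈ latF α β ↔ x ∈ latF α β := by
  simp only [mem_latF_iff] at hc ⊢
  exact AddSubgroup.add_mem_cancel_right _ hc

namespace Config

variable {α β : ℝ} {ℒ₁ ℒ₂ : ℝ → ℕ} (hL : Config α β ℒ₁ ℒ₂)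
include hL

lemma mem_latF_of_ne_zero₁ {x : ℝ} (hx : ℒ₁ (x + α / 2) ≠ 0) : x ∈ latF α β := by
  obtain ⟨a, b, h⟩ := hL.supp1 _ hx
  exact ⟨a, b, by linarith⟩

lemma mem_latF_of_ne_zero₂ {x : ℝ} (hx : ℒ₂ (x + β / 2) ≠ 0) : x ∈ latF α β := by
  obtain ⟨a, b, h⟩ := hL.supp2 _ hx
  exact ⟨a, b, by linarith⟩

-- Off the lattice all four terms vanish.
lemma conserv_of_real (x : ℝ) :
    ℒ₁ (x + β + α / 2) + ℒ₂ (x + α + β / 2) = ℒ₁ (x + α / 2) + ℒ₂ (x + β / 2) := by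
  by_cases hx : x ∈ latF α β
  · obtain ⟨a, b, rfl⟩ := hx
    convert hL.conserv _ ⟨a, b, rfl⟩ using 3 <;> ring_nf
  · have hα : x + α ∉ latF α β := by rwa [add_mem_latF_iff ⟨1, 0, by simp⟩]
    have hβ : x + β ∉ latF α β := by rwa [add_mem_latF_iff ⟨0, 1, by simp⟩]
    have h₁ (y : ℝ) (hy : y ∉ latF α β) : ℒ₁ (y + α / 2) = 0 :=
      by_contra fun h => hy (hL.mem_latF_of_ne_zero₁ h)
    have h₂ (y : ℝ) (hy : y ∉ latF α β) : ℒ₂ (y + β / 2) = 0 :=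
      by_contra fun h => hy (hL.mem_latF_of_ne_zero₂ h)
    rw [h₁ _ hx, h₁ _ hβ, h₂ _ hx, h₂ _ hα]

lemma hasFiniteSupport₁ : HasFiniteSupport fun x => ℒ₁ (x + α / 2) :=
  HasFiniteSupport.comp_add_right hL.fin1 _

lemma hasFiniteSupport₂ : HasFiniteSupport fun x => ℒ₂ (x + β / 2) :=
  HasFiniteSupport.comp_add_right hL.fin2 _

end Config

@[simp] lemma stepOf_zero (α β : ℝ) : stepOf α β 0 = α := rfl

@[simp] lemma stepOf_one (α β : ℝ) : stepOf α β 1 = β := rfl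

lemma sum_map_stepOf (α β : ℝ) (l : List (Fin 2)) :
    (l.map (stepOf α β)).sum = l.count 0 * α + l.count 1 * β := by
  induction l with
  | nil => simp
  | cons i l ih => fin_cases i <;> simp [ih, add_mul, add_comm, add_left_comm, add_assoc]

section PathSum

variable {M : Type*} [AddCommMonoid M] (α β : ℝ) (w : Fin 2 → ℝ → M)

def pathSum (l : List (Fin 2)) (lam : ℝ) : M :=
  ∑ j ∈ Finset.range l.length, w (l.getD j 0) (lam + sigmaL α β l j)

lemma pathSum_cons (i : Fin 2) (l : List (Fin 2)) (lam : ℝ) :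
    pathSum α β w (i :: l) lam = w i lam + pathSum α β w l (lam + stepOf α β i) := by
  rw [pathSum, List.length_cons, Finset.sum_range_succ', add_comm]
  simp [pathSum, sigmaL, add_assoc]

lemma pathSum_append_singleton (l : List (Fin 2)) (i : Fin 2) (lam : ℝ) :
    pathSum α β w (l ++ [i]) lam = pathSum α β w l lam + w i (lam + (l.map (stepOf α β)).sum) := by
  have hσ (j : ℕ) (hj : j ≤ l.length) : sigmaL α β (l ++ [i]) j = sigmaL α β l j := by
    simp [sigmaL, List.take_append_of_le_length hj]
  rw [pathSum, List.length_append, List.length_singleton, Finset.sum_range_succ,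
    hσ _ le_rfl, List.getD_append_right _ _ _ _ le_rfl, Nat.sub_self, List.getD_cons_zero,
    sigmaL, List.take_length]
  congr 1
  refine Finset.sum_congr rfl fun j hj => ?_
  have hj := Finset.mem_range.1 hj
  rw [List.getD_append _ _ _ _ hj, hσ _ hj.le]

lemma pathSum_perm (hw : ∀ lam, w 0 lam + w 1 (lam + α) = w 1 lam + w 0 (lam + β))
    {l l' : List (Fin 2)} (h : l.Perm l') : pathSum α β w l = pathSum α β w l' := by
  induction h with
  | nil => rfl
  | cons i _ ih => ext lam; rw [pathSum_cons, pathSum_cons, ih]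
  | swap i k l =>
    ext lam
    simp only [pathSum_cons, ← add_assoc]
    congr 1
    · fin_cases i <;> fin_cases k
      · rfl
      · exact (hw lam).symm
      · exact hw lam
      · rfl
    · rw [add_right_comm]
  | trans _ _ ih₁ ih₂ => rw [ih₁, ih₂]

lemma hasFiniteSupport_pathSum (hw : ∀ i, HasFiniteSupport (w i)) (l : List (Fin 2)) :
    HasFiniteSupport (pathSum α β w l) := by
  refine ((Finset.range l.length).finite_toSet.biUnion fun j _ => ?_).subset
    (Finset.support_sum _ _)
  exact (hw _).comp_add_right _

end PathSum

lemma Function.Periodic.eq_zero_of_hasFiniteSupport {M : Type*} [Zero M] {φ : ℝ → M} {c : ℝ}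
    (hφ : Periodic φ c) (hc : c ≠ 0) (hfin : HasFiniteSupport φ) : φ = 0 := by
  ext x
  by_contra hx
  refine Set.infinite_of_injective_forall_mem (f := fun n : ℕ => x + n * c) ?_ (fun n => ?_) hfin
  · intro a b hab
    simpa [hc] using hab
  · simpa [mem_support, hφ.nat_mul n x] using hx

section PathSumCancel

variable {M : Type*} [AddCancelCommMonoid M] {α β : ℝ} {w : Fin 2 → ℝ → M}
  (hw : ∀ lam, w 0 lam + w 1 (lam + α) = w 1 lam + w 0 (lam + β))
include hw

lemma pathSum_periodic {l : List (Fin 2)} (hl : (l.map (stepOf α β)).sum = 0) (i : Fin 2) :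
    Periodic (pathSum α β w l) (stepOf α β i) := by
  intro lam
  have h := congr_fun (pathSum_perm α β w hw (List.perm_append_singleton i l)) lam
  rw [pathSum_append_singleton, pathSum_cons, hl, add_zero, add_comm] at h
  exact (add_left_cancel h).symm

lemma pathSum_eq_zero (hfin : ∀ i, HasFiniteSupport (w i)) (hαβ : (α, β) ≠ (0, 0))
    {l : List (Fin 2)} (hl : (l.map (stepOf α β)).sum = 0) : pathSum α β w l = 0 := by
  obtain ⟨i, hi⟩ : ∃ i, stepOf α β i ≠ 0 := by
    by_contra! h
    exact hαβ (Prod.ext (h 0) (h 1))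
  exact (pathSum_periodic hw hl i).eq_zero_of_hasFiniteSupport hi
    (hasFiniteSupport_pathSum α β w hfin l)

end PathSumCancel

lemma pathSum_left_eq_pathSum_right {α β : ℝ} {f g : ℝ → ℕ}
    (hfg : ∀ x, f (x + β) + g (x + α) = f x + g x) (hf : HasFiniteSupport f)
    (hg : HasFiniteSupport g) (hαβ : (α, β) ≠ (0, 0)) {l : List (Fin 2)}
    (hl : (l.map (stepOf α β)).sum = 0) :
    pathSum α β (fun i x => if i = 0 then f x else 0) l =
      pathSum α β (fun i x => if i = 0 then 0 else g x) l := by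
  have hzero := pathSum_eq_zero (w := fun i x => if i = 0 then (f x : ℤ) else -(g x : ℤ))
    (fun x => by
      have := hfg x
      simp only [Fin.isValue, ↓reduceIte, one_ne_zero]
      omega) (fun i => by
      fin_cases i
      · exact hf.fun_comp (g := ((↑) : ℕ → ℤ)) Nat.cast_zero
      · exact hg.fun_comp (g := fun n : ℕ => -(n : ℤ)) (by simp)) hαβ hl
  ext lam
  have h := congr_fun hzero lam
  rw [Pi.zero_apply] at h
  simp only [pathSum] at h ⊢
  zify
  rw [← sub_eq_zero, ← Finset.sum_sub_distrib]
  refine (Finset.sum_congr rfl fun j _ => ?_).trans h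
  split_ifs <;> simp

def edgeWeight (α β : ℝ) (ℒ₁ ℒ₂ : ℝ → ℕ) (i : Fin 2) (x : ℝ) : ℕ :=
  if i = 0 then ℒ₁ (x + α / 2) else ℒ₂ (x + β / 2)

lemma PfunC_add_ofReal (ℒ : ℝ → ℕ) (u : ℂ) (c : ℝ) :
    PfunC ℒ (u + c) = ∏ᶠ lam : ℝ, (u - lam) ^ ℒ (lam + c) := by
  rw [PfunC, ← finprod_comp_equiv (Equiv.addRight c)]
  refine finprod_congr fun lam => ?_
  simp only [Equiv.coe_addRight, ofReal_add, add_sub_add_right_eq_sub]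

lemma prod_PfunC_eq_finprod_pathSum {α β : ℝ} {ℒ₁ ℒ₂ : ℝ → ℕ} (h₁ : HasFiniteSupport ℒ₁)
    (h₂ : HasFiniteSupport ℒ₂) (l : List (Fin 2)) (u : ℂ) :
    ∏ j ∈ Finset.range l.length,
        PfunC (if l.getD j 0 = 0 then ℒ₁ else ℒ₂)
          (u + (sigmaL α β l j : ℝ) + (if l.getD j 0 = 0 then (α : ℂ) else (β : ℂ)) / 2) =
      ∏ᶠ lam : ℝ, (u - lam) ^ pathSum α β (edgeWeight α β ℒ₁ ℒ₂) l lam := by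
  have hfactor (j : ℕ) :
      PfunC (if l.getD j 0 = 0 then ℒ₁ else ℒ₂)
          (u + (sigmaL α β l j : ℝ) + (if l.getD j 0 = 0 then (α : ℂ) else (β : ℂ)) / 2) =
        ∏ᶠ lam : ℝ, (u - lam) ^ edgeWeight α β ℒ₁ ℒ₂ (l.getD j 0) (lam + sigmaL α β l j) := by
    split_ifs with hj
    · rw [show u + (sigmaL α β l j : ℂ) + α / 2 = u + ((sigmaL α β l j + α / 2 : ℝ) : ℂ) by
        push_cast; ring, PfunC_add_ofReal]
      simp only [edgeWeight, hj, ↓reduceIte, add_assoc]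
    · rw [show u + (sigmaL α β l j : ℂ) + β / 2 = u + ((sigmaL α β l j + β / 2 : ℝ) : ℂ) by
        push_cast; ring, PfunC_add_ofReal]
      simp only [edgeWeight, hj, ↓reduceIte, add_assoc]
  rw [Finset.prod_congr rfl fun j _ => hfactor j, ← finprod_prod_comm]
  · simp only [pathSum, Finset.prod_pow_eq_pow_sum]
  · intro j _
    refine HasFiniteSupport.hasFiniteMulSupport_fun_pow _ (HasFiniteSupport.comp_add_right ?_ _)
    unfold edgeWeight
    split_ifs
    exacts [h₁.comp_add_right _, h₂.comp_add_right _]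

namespace Config

variable {α β : ℝ} {ℒ₁ ℒ₂ : ℝ → ℕ} (hL : Config α β ℒ₁ ℒ₂)
include hL

lemma hasFiniteSupport_ordL (l : List (Fin 2)) : HasFiniteSupport (ordL α β ℒ₁ l) :=
  hasFiniteSupport_pathSum α β (fun i x => if i = 0 then ℒ₁ (x + α / 2) else 0)
    (fun i => by fin_cases i; exacts [hL.hasFiniteSupport₁, by simp [HasFiniteSupport]]) l

lemma mem_latF_of_ordL_ne_zero {l : List (Fin 2)} {lam : ℝ} (h : ordL α β ℒ₁ l lam ≠ 0) :
    lam ∈ latF α β := by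
  obtain ⟨j, -, hj⟩ := Finset.exists_ne_zero_of_sum_ne_zero h
  split_ifs at hj
  · rw [← add_mem_latF_iff (sigmaL_mem_latF α β l j)]
    exact hL.mem_latF_of_ne_zero₁ hj
  · exact absurd rfl hj

lemma pathSum_edgeWeight (hαβ : (α, β) ≠ (0, 0)) {l : List (Fin 2)}
    (hl : (l.map (stepOf α β)).sum = 0) (lam : ℝ) :
    pathSum α β (edgeWeight α β ℒ₁ ℒ₂) l lam = 2 * ordL α β ℒ₁ l lam := by
  have hbalance := congr_fun (pathSum_left_eq_pathSum_right hL.conserv_of_real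
    hL.hasFiniteSupport₁ hL.hasFiniteSupport₂ hαβ hl) lam
  have hsplit : pathSum α β (edgeWeight α β ℒ₁ ℒ₂) l lam =
      pathSum α β (fun i x => if i = 0 then ℒ₁ (x + α / 2) else 0) l lam +
        pathSum α β (fun i x => if i = 0 then 0 else ℒ₂ (x + β / 2)) l lam := by
    simp only [pathSum, ← Finset.sum_add_distrib]
    refine Finset.sum_congr rfl fun j _ => ?_
    by_cases hj : l.getD j 0 = 0 <;> simp only [edgeWeight, hj, ↓reduceIte, add_zero, zero_add]
  rw [hsplit, ← hbalance, two_mul]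
  rfl

end Config

theorem stmt16_general (m n : ℕ) (α β : ℝ)
    (hαβ : (α, β) ≠ ((0 : ℝ), (0 : ℝ))) (hlin : (m : ℝ) * α + (n : ℝ) * β = 0)
    (ℒ₁ ℒ₂ : ℝ → ℕ) (hconf : Config α β ℒ₁ ℒ₂)
    (l : List (Fin 2)) (hl0 : l.count 0 = m) (hl1 : l.count 1 = n) :
    {lam ∈ latF α β | ordL α β ℒ₁ l lam ≠ 0}.Finite ∧
    ∀ u : ℂ,
      (∏ j ∈ Finset.range l.length,
        PfunC (if l.getD j 0 = 0 then ℒ₁ else ℒ₂)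
          (u + (sigmaL α β l j : ℝ) +
            (if l.getD j 0 = 0 then (α : ℂ) else (β : ℂ)) / 2)) =
      ∏ᶠ lam ∈ latF α β, (u - (lam : ℂ)) ^ (2 * ordL α β ℒ₁ l lam) := by
  have hl : (l.map (stepOf α β)).sum = 0 := by rw [sum_map_stepOf, hl0, hl1, hlin]
  refine ⟨(hconf.hasFiniteSupport_ordL l).subset fun lam h => h.2, fun u => ?_⟩
  rw [prod_PfunC_eq_finprod_pathSum hconf.fin1 hconf.fin2, finprod_mem_def,
    Set.mulIndicator_eq_self.2]
  · simp only [hconf.pathSum_edgeWeight hαβ hl]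
  · intro lam hlam
    by_contra hF
    have hord : ordL α β ℒ₁ l lam = 0 := not_not.1 (mt hconf.mem_latF_of_ordL_ne_zero hF)
    exact hlam (by simp [hord])

/-- For every `𝐢 ∈ Seq₂(m,n)` and `u ∈ ℂ`:
`∏_{j=1}^{ℓ} P_{i_j}(u+σ_j+α_{i_j}/2) = ∏_{λ∈F} (u−λ)^{2·ord(𝐢,λ)}`, the right-hand
product having only finitely many factors `≠ 1` since `ord(𝐢,·)` is nonzero at only
finitely many `λ ∈ F`. -/
theorem stmt16 (m n : ℕ) (hmn : Nat.Coprime m n) (α β : ℝ)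
    (hαβ : (α, β) ≠ ((0 : ℝ), (0 : ℝ))) (hlin : (m : ℝ) * α + (n : ℝ) * β = 0)
    (ℒ₁ ℒ₂ : ℝ → ℕ) (hconf : Config α β ℒ₁ ℒ₂)
    (l : List (Fin 2)) (hl0 : l.count 0 = m) (hl1 : l.count 1 = n) :
    {lam ∈ latF α β | ordL α β ℒ₁ l lam ≠ 0}.Finite ∧
    ∀ u : ℂ,
      (∏ j ∈ Finset.range l.length,
        PfunC (if l.getD j 0 = 0 then ℒ₁ else ℒ₂)
          (u + (sigmaL α β l j : ℝ) +
            (if l.getD j 0 = 0 then (α : ℂ) else (β : ℂ)) / 2)) =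
      ∏ᶠ lam ∈ latF α β, (u - (lam : ℂ)) ^ (2 * ordL α β ℒ₁ l lam) :=
  stmt16_general m n α β hαβ hlin ℒ₁ ℒ₂ hconf l hl0 hl1
end
end
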